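/- arXiv:2311.17246 — 5 statements merged into one kernel-verified Lean document; each statement's English description precedes it below -/
import Mathlib

section
/- If D ∈ ℝ^{n×n} is the matrix of squared pairwise Euclidean distances of points y_1,…,y_n ∈ ℝ^q, i.e., D_{ij} = ‖y_i − y_j‖², then the double-centered matrix M = −(1/2) Q_n D Q_n is positive semidefinite, where Q_n = I_n − n^{-1}J_n. -/
open Matrix

/-- For `D` the matrix of squared pairwise Euclidean distances of points `y₁,…,yₙ ∈ ℝ^q`,
the double-centered matrix `M = -(1/2) Qₙ D Qₙ` is positive semidefinite. -/
theorem double_centered_sq_dist_posSemidef (n q : ℕ)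
    (y : Fin n → EuclideanSpace ℝ (Fin q))
    (D : Matrix (Fin n) (Fin n) ℝ)
    (hD : ∀ i j, D i j = ‖y i - y j‖ ^ 2)
    (Q : Matrix (Fin n) (Fin n) ℝ)
    (hQ : Q = (1 : Matrix (Fin n) (Fin n) ℝ) - (n : ℝ)⁻¹ • (Matrix.of fun _ _ => (1 : ℝ)))
    (M : Matrix (Fin n) (Fin n) ℝ)
    (hM : M = (-(1 / 2) : ℝ) • (Q * D * Q)) :
    M.PosSemidef := by
  classical
  set Y : Matrix (Fin n) (Fin q) ℝ := Matrix.of (fun i k => y i k) with hY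
  set RA : Matrix (Fin n) (Fin n) ℝ := Matrix.of (fun i _ => ‖y i‖ ^ 2) with hRA
  set CA : Matrix (Fin n) (Fin n) ℝ := Matrix.of (fun _ j => ‖y j‖ ^ 2) with hCA
  have hQrow : ∀ i : Fin n, ∑ k, Q i k = 0 := by
    intro i
    have hn : (0 : ℝ) < n := by exact_mod_cast i.pos
    rw [hQ]
    simp [Matrix.one_apply, Finset.sum_ite_eq, Finset.mul_sum]
    field_simp
    ring
  have hQsymm : Qᵀ = Q := by
    rw [hQ]
    ext i j
    simp [Matrix.one_apply, eq_comm]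
  have hQcol : ∀ j : Fin n, ∑ k, Q k j = 0 := by
    intro j
    have := hQrow j
    calc ∑ k, Q k j = ∑ k, Qᵀ j k := by simp [Matrix.transpose_apply]
    _ = ∑ k, Q j k := by rw [hQsymm]
    _ = 0 := hQrow j
  have hD' : D = RA + CA - (2 : ℝ) • (Y * Yᵀ) := by
    ext i j
    have hnorm : ‖y i - y j‖ ^ 2 = ‖y i‖ ^ 2 - 2 * inner ℝ (y i) (y j) + ‖y j‖ ^ 2 :=
      norm_sub_sq_real (y i) (y j)
    have hinner : (inner ℝ (y i) (y j) : ℝ) = ∑ k, y i k * y j k := by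
      simp [PiLp.inner_apply, RCLike.inner_apply, conj_trivial, mul_comm]
    simp only [hD, Matrix.sub_apply, Matrix.add_apply, Matrix.smul_apply,
      Matrix.mul_apply, hRA, hCA, hY, Matrix.of_apply, Matrix.transpose_apply,
      smul_eq_mul]
    rw [hnorm, hinner]
    ring
  have hQCA : Q * CA = 0 := by
    ext i j
    simp only [Matrix.mul_apply, hCA, Matrix.of_apply, Matrix.zero_apply]
    rw [← Finset.sum_mul, hQrow i, zero_mul]
  have hRAQ : RA * Q = 0 := by
    ext i j
    simp only [Matrix.mul_apply, hRA, Matrix.of_apply, Matrix.zero_apply]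
    rw [← Finset.mul_sum, hQcol j, mul_zero]
  have hQH : Qᴴ = Q := by
    rw [Matrix.conjTranspose_eq_transpose_of_trivial, hQsymm]
  have h1 : Q * D * Q = (-2 : ℝ) • (Q * (Y * Yᵀ) * Q) := by
    rw [hD']
    simp only [Matrix.mul_sub, Matrix.mul_add, Matrix.sub_mul, Matrix.add_mul,
      Matrix.mul_smul, Matrix.smul_mul]
    rw [Matrix.mul_assoc Q RA Q, hRAQ, Matrix.mul_zero, hQCA, Matrix.zero_mul]
    simp
  have hM2 : M = (Q * Y) * (Q * Y)ᴴ := by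
    rw [hM, h1, smul_smul]
    norm_num
    rw [hQsymm]; simp [Matrix.mul_assoc]
  rw [hM2]
  exact Matrix.posSemidef_self_mul_conjTranspose _
end

section
/- Multidimensional scaling recovers distances: if M = −(1/2) Q_n D Q_n is the double-centered squared Euclidean distance matrix of points y_1,…,y_n ∈ ℝ^q and S ∈ ℝ^{n×k} satisfies S S^⊤ = M, then ‖S_i − S_j‖ = ‖y_i − y_j‖ for all i, j. -/
open Matrix

/-- Multidimensional scaling recovers distances: if `M = -(1/2) Qₙ D Qₙ` is the
double-centered squared Euclidean distance matrix of points `y₁,…,yₙ ∈ ℝ^q` and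
`S Sᵀ = M`, then the Euclidean distances between the rows of `S` equal the
distances between the original points. -/
theorem mds_recovers_distances (n q k : ℕ)
    (y : Fin n → EuclideanSpace ℝ (Fin q))
    (D : Matrix (Fin n) (Fin n) ℝ)
    (hD : ∀ i j, D i j = ‖y i - y j‖ ^ 2)
    (Q : Matrix (Fin n) (Fin n) ℝ)
    (hQ : Q = (1 : Matrix (Fin n) (Fin n) ℝ) - (n : ℝ)⁻¹ • (Matrix.of fun _ _ => (1 : ℝ)))
    (M : Matrix (Fin n) (Fin n) ℝ)
    (hM : M = (-(1 / 2) : ℝ) • (Q * D * Q))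
    (S : Matrix (Fin n) (Fin k) ℝ)
    (hS : S * Sᵀ = M) :
    ∀ i j, Real.sqrt (∑ l, (S i l - S j l) ^ 2) = ‖y i - y j‖ := by
  intro i j
  set c : ℝ := (n : ℝ)⁻¹ with hc
  have hQD : ∀ a b, (Q * D) a b = D a b - c * ∑ x, D x b := by
    intro a b
    simp only [Matrix.mul_apply, hQ, Matrix.sub_apply, Matrix.one_apply,
      Matrix.smul_apply, Matrix.of_apply, smul_eq_mul, mul_one, sub_mul,
      ite_mul, one_mul, zero_mul]
    rw [Finset.sum_sub_distrib, Finset.sum_ite_eq, ← Finset.mul_sum]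
    simp
  have hQDQ : ∀ a b, (Q * D * Q) a b
      = D a b - c * (∑ x, D x b) - c * (∑ x, D a x)
        + c * c * (∑ x, ∑ z, D x z) := by
    intro a b
    have h1 : (Q * D * Q) a b = (Q * D) a b - c * ∑ x, (Q * D) a x := by
      rw [hQ, Matrix.mul_sub, Matrix.mul_one, Matrix.sub_apply,
        Matrix.mul_smul, Matrix.smul_apply, smul_eq_mul]
      congr 1
      simp [Matrix.mul_apply]
    rw [h1, hQD]
    have h2 : ∑ x, (Q * D) a x = (∑ x, D a x) - c * ∑ x, ∑ z, D x z := by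
      rw [Finset.sum_congr rfl fun x _ => hQD a x, Finset.sum_sub_distrib,
        ← Finset.mul_sum, Finset.sum_comm]
    rw [h2]
    ring
  have hdiag : ∀ a, D a a = 0 := by intro a; rw [hD]; simp
  have hsym : ∀ a, ∑ x, D x a = ∑ x, D a x := by
    intro a
    refine Finset.sum_congr rfl fun x _ => ?_
    rw [hD, hD, norm_sub_rev]
  have expand : ∑ l, (S i l - S j l) ^ 2
      = (S * Sᵀ) i i + (S * Sᵀ) j j - 2 * (S * Sᵀ) i j := by
    simp only [Matrix.mul_apply, Matrix.transpose_apply, Finset.mul_sum,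
      ← Finset.sum_add_distrib, ← Finset.sum_sub_distrib]
    exact Finset.sum_congr rfl fun l _ => by ring
  have hMval : ∀ a b, M a b = -(1 / 2) * ((Q * D * Q) a b) := by
    intro a b; rw [hM]; simp
  have key : ∑ l, (S i l - S j l) ^ 2 = D i j := by
    rw [expand, hS, hMval, hMval, hMval, hQDQ, hQDQ, hQDQ, hdiag, hdiag,
      hsym i, hsym j]
    ring
  rw [key, hD, Real.sqrt_sq (norm_nonneg _)]
end

section
/- Under the linear conditional mean assumption E(X | β^⊤X) = a + B β^⊤X (affine in β^⊤X) and E(X) = 0, Var(X) = Σ invertible, the ordinary least squares direction Σ^{-1} Cov(X, S) lies in the span of β whenever the scalar random variable S satisfies E(S | X) = g(β^⊤X) for some measurable g. -/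
open MeasureTheory Matrix

/-- The conditional expectation of an `L²` function is in `L²`. -/
lemma memLp_two_condexp_aux {Ω : Type*} {m : MeasurableSpace Ω} [mΩ : MeasurableSpace Ω]
    (hm : m ≤ mΩ) (μ : Measure Ω) [IsProbabilityMeasure μ] {f : Ω → ℝ} (hf : MemLp f 2 μ) :
    MemLp (μ[f|m]) 2 μ := by
  set F : Lp ℝ 2 μ := hf.toLp f with hF
  have hG : MemLp ((condExpL2 ℝ ℝ hm F : Ω → ℝ)) 2 μ := by
    exact Lp.memLp _
  have heq : ((condExpL2 ℝ ℝ hm F : Ω → ℝ)) =ᵐ[μ] μ[f|m] := by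
    apply ae_eq_condExp_of_forall_setIntegral_eq hm (hf.integrable one_le_two)
    · intro s _ _
      exact (hG.integrable one_le_two).integrableOn
    · intro s hs hμs
      have h1 := integral_condExpL2_eq (E' := ℝ) (𝕜 := ℝ) hm F hs hμs.ne
      rw [h1]
      exact setIntegral_congr_ae (hm s hs) ((hf.coeFn_toLp).mono fun x hx _ => hx)
    · exact lpMeas.aestronglyMeasurable _
  exact hG.ae_eq heq

/-- Under the linear conditional mean assumption `E(X | βᵀX) = a + B βᵀX` with `E X = 0`
and `Var(X) = Σ` invertible, the OLS direction `Σ⁻¹ Cov(X,S)` lies in the span of `β`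
whenever `E(S | X) = g(βᵀX)` for some measurable `g`. -/
theorem ols_direction_in_span {Ω : Type*} [mΩ : MeasurableSpace Ω]
    (μ : Measure Ω) [IsProbabilityMeasure μ]
    (p : ℕ) (β : Fin p → ℝ)
    (X : Ω → (Fin p → ℝ)) (hX : Measurable X)
    (hX2 : ∀ i, MemLp (fun ω => X ω i) 2 μ)
    (hmean : ∀ i, ∫ ω, X ω i ∂μ = 0)
    (Z : Ω → ℝ) (hZ : Z = fun ω => ∑ i, β i * X ω i)
    (Sig : Matrix (Fin p) (Fin p) ℝ)
    (hSig : ∀ i j, Sig i j = ∫ ω, X ω i * X ω j ∂μ)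
    (hSigInv : IsUnit Sig.det)
    -- linear conditional mean assumption: E(X | βᵀX) is affine in βᵀX
    (a B : Fin p → ℝ)
    (hLCM : ∀ i, μ[fun ω => X ω i | MeasurableSpace.comap Z inferInstance]
        =ᵐ[μ] fun ω => a i + B i * Z ω)
    (S : Ω → ℝ) (hS : Integrable S μ) (hS2 : MemLp S 2 μ)
    (g : ℝ → ℝ) (hg : Measurable g)
    (hcond : μ[S | MeasurableSpace.comap X inferInstance] =ᵐ[μ] fun ω => g (Z ω))
    (cov : Fin p → ℝ)
    (hcov : ∀ i, cov i = (∫ ω, X ω i * S ω ∂μ) - (∫ ω, X ω i ∂μ) * (∫ ω, S ω ∂μ)) :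
    ∃ c : ℝ, Sig⁻¹.mulVec cov = c • β := by
  have hZm : Measurable[mΩ] Z := by
    rw [hZ]
    exact Finset.measurable_sum _ fun i _ =>
      (measurable_const.mul ((measurable_pi_apply i).comp hX))
  set m : MeasurableSpace Ω := MeasurableSpace.comap X inferInstance with hm_def
  set m' : MeasurableSpace Ω := MeasurableSpace.comap Z inferInstance with hm'_def
  have hm : m ≤ mΩ := hX.comap_le
  have hm' : m' ≤ mΩ := hZm.comap_le
  -- product of two L² functions is integrable
  have hmul : ∀ {f h : Ω → ℝ}, MemLp f 2 μ → MemLp h 2 μ →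
      Integrable (fun ω => f ω * h ω) μ := by
    intro f h hf hh
    have : MemLp (f • h) 1 μ := hh.smul hf
      (hpqr := ⟨by simp only [one_div, inv_one, ENNReal.inv_two_add_inv_two]⟩)
    exact memLp_one_iff_integrable.mp this
  have hZ2mem : MemLp Z 2 μ := by
    rw [hZ]
    exact memLp_finset_sum _ fun i _ => (hX2 i).const_mul (β i)
  have hZint : Integrable Z μ := hZ2mem.integrable one_le_two
  have hZ_m' : Measurable[m'] Z := Measurable.of_comap_le le_rfl
  have hintZ : ∫ ω, Z ω ∂μ = 0 := by
    rw [hZ]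
    rw [integral_finset_sum _ fun i _ => ((hX2 i).integrable one_le_two).const_mul (β i)]
    simp [integral_const_mul, hmean]
  -- key computation using the pull-out property and the LCM assumption
  have key : ∀ (φ : Ω → ℝ), MemLp φ 2 μ → StronglyMeasurable[m'] φ → ∀ i,
      ∫ ω, X ω i * φ ω ∂μ = a i * (∫ ω, φ ω ∂μ) + B i * (∫ ω, Z ω * φ ω ∂μ) := by
    intro φ hφ2 hφm i
    have hφint : Integrable φ μ := hφ2.integrable one_le_two
    have hint : Integrable (φ * fun ω => X ω i) μ := hmul hφ2 (hX2 i)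
    have h1 : μ[(φ * fun ω => X ω i)|m'] =ᵐ[μ] φ * μ[fun ω => X ω i|m'] :=
      condExp_mul_of_stronglyMeasurable_left hφm hint ((hX2 i).integrable one_le_two)
    have h2 : φ * μ[fun ω => X ω i|m'] =ᵐ[μ] fun ω => φ ω * (a i + B i * Z ω) := by
      filter_upwards [hLCM i] with ω hω
      simp only [Pi.mul_apply, hω]
    calc ∫ ω, X ω i * φ ω ∂μ = ∫ ω, (φ * fun ω => X ω i) ω ∂μ := by
            simp only [Pi.mul_apply, mul_comm]
      _ = ∫ ω, (μ[(φ * fun ω => X ω i)|m']) ω ∂μ := (integral_condExp hm').symm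
      _ = ∫ ω, φ ω * (a i + B i * Z ω) ∂μ := integral_congr_ae (h1.trans h2)
      _ = ∫ ω, (a i * φ ω + B i * (Z ω * φ ω)) ∂μ := by
            congr 1; funext ω; ring
      _ = a i * (∫ ω, φ ω ∂μ) + B i * (∫ ω, Z ω * φ ω ∂μ) := by
            rw [integral_add (hφint.const_mul _) ((hmul hZ2mem hφ2).const_mul _),
              integral_const_mul, integral_const_mul]
  -- a = 0
  have ha : ∀ i, a i = 0 := by
    intro i
    have h := key (fun _ => 1) (memLp_const 1) stronglyMeasurable_const i
    simp only [mul_one] at h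
    rw [hmean i, hintZ, integral_const] at h
    simpa using h.symm
  -- B i * ∫ Z² = (Sig.mulVec β) i
  have hB : ∀ i, Sig.mulVec β i = B i * (∫ ω, Z ω * Z ω ∂μ) := by
    intro i
    have h := key Z hZ2mem hZ_m'.stronglyMeasurable i
    rw [ha i, hintZ] at h
    simp only [zero_mul, mul_zero, zero_add] at h
    have hXZ : ∀ ω, X ω i * Z ω = ∑ j, β j * (X ω i * X ω j) := by
      intro ω; rw [hZ]; simp only [Finset.mul_sum]
      exact Finset.sum_congr rfl fun j _ => by ring
    have h2 : ∫ ω, X ω i * Z ω ∂μ = ∑ j, Sig i j * β j := by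
      simp only [hXZ]
      rw [integral_finset_sum _ fun j _ => (hmul (hX2 i) (hX2 j)).const_mul (β j)]
      refine Finset.sum_congr rfl fun j _ => ?_
      rw [integral_const_mul, hSig i j]; ring
    rw [← h, h2]
    simp [Matrix.mulVec, dotProduct]
  -- g ∘ Z is in L²
  have hgZ2 : MemLp (fun ω => g (Z ω)) 2 μ :=
    (memLp_two_condexp_aux (mΩ := mΩ) hm μ hS2).ae_eq hcond
  have hgZm' : StronglyMeasurable[m'] (fun ω => g (Z ω)) :=
    (hg.comp hZ_m').stronglyMeasurable
  -- cov i = ∫ X_i S = ∫ X_i g(Z) = B i * ∫ Z g(Z)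
  set c1 : ℝ := ∫ ω, Z ω * g (Z ω) ∂μ with hc1
  have hcov' : ∀ i, cov i = B i * c1 := by
    intro i
    have hXm : Measurable[m] X := Measurable.of_comap_le le_rfl
    have hXim : StronglyMeasurable[m] (fun ω => X ω i) :=
      ((measurable_pi_apply i).comp hXm).stronglyMeasurable
    have hintXS : Integrable ((fun ω => X ω i) * S) μ := hmul (hX2 i) hS2
    have h1 : μ[((fun ω => X ω i) * S)|m] =ᵐ[μ] (fun ω => X ω i) * μ[S|m] :=
      condExp_mul_of_stronglyMeasurable_left hXim hintXS hS
    have h2 : (fun ω => X ω i) * μ[S|m] =ᵐ[μ] fun ω => X ω i * g (Z ω) := by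
      filter_upwards [hcond] with ω hω
      simp only [Pi.mul_apply, hω]
    have hstep : ∫ ω, X ω i * S ω ∂μ = ∫ ω, X ω i * g (Z ω) ∂μ := by
      calc ∫ ω, X ω i * S ω ∂μ = ∫ ω, ((fun ω => X ω i) * S) ω ∂μ := rfl
        _ = ∫ ω, (μ[((fun ω => X ω i) * S)|m]) ω ∂μ := (integral_condExp hm).symm
        _ = ∫ ω, X ω i * g (Z ω) ∂μ := integral_congr_ae (h1.trans h2)
    rw [hcov i, hmean i, zero_mul, sub_zero, hstep, key _ hgZ2 hgZm' i, ha i, zero_mul, zero_add]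
  set t : ℝ := ∫ ω, Z ω * Z ω ∂μ with ht_def
  by_cases ht : t = 0
  · -- degenerate case : Z = 0 a.e., so cov = 0
    have hZ0 : Z =ᵐ[μ] 0 := by
      have hnn : 0 ≤ fun ω => Z ω * Z ω := fun ω => mul_self_nonneg _
      have := (integral_eq_zero_iff_of_nonneg hnn (hmul hZ2mem hZ2mem)).mp ht
      filter_upwards [this] with ω hω
      exact mul_self_eq_zero.mp hω
    have hc10 : c1 = 0 := by
      rw [hc1]
      have : (fun ω => Z ω * g (Z ω)) =ᵐ[μ] 0 := by
        filter_upwards [hZ0] with ω hω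
        simp [hω]
      rw [integral_congr_ae this]; simp
    have hcov0 : cov = 0 := by
      funext i
      rw [hcov' i, hc10, mul_zero]; rfl
    exact ⟨0, by rw [hcov0, Matrix.mulVec_zero, zero_smul]⟩
  · refine ⟨c1 / t, ?_⟩
    have hcovB : cov = (c1 / t) • Sig.mulVec β := by
      funext i
      rw [hcov' i]
      simp only [Pi.smul_apply, smul_eq_mul, hB i, ← ht_def]
      field_simp
    rw [hcovB, Matrix.mulVec_smul, Matrix.mulVec_mulVec, Matrix.nonsing_inv_mul Sig hSigInv,
      Matrix.one_mulVec]
end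

section
/- If X ∈ ℝ^p has mean zero, Var(X) = Σ invertible, and E(X | β^⊤X) = Σβ (β^⊤Σβ)^{-1} β^⊤X, then Cov(X, S) = Σβ (β^⊤Σβ)^{-1} Cov(β^⊤X, S) for any integrable real random variable S with E(S|X) measurable with respect to β^⊤X; hence Σ^{-1}Cov(X,S) is proportional to β. -/
open MeasureTheory Matrix

/-- If `X` has mean zero, `Var(X) = Σ` invertible, and
`E(X | βᵀX) = Σβ (βᵀΣβ)⁻¹ βᵀX`, then `Cov(X,S) = Σβ (βᵀΣβ)⁻¹ Cov(βᵀX,S)` for any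
integrable `S` whose conditional mean given `X` is a function of `βᵀX`;
hence `Σ⁻¹ Cov(X,S)` is proportional to `β`. -/
theorem cov_prop_to_beta {Ω : Type*} [mΩ : MeasurableSpace Ω]
    (μ : Measure Ω) [IsProbabilityMeasure μ]
    (p : ℕ) (β : Fin p → ℝ) (hβ : β ≠ 0)
    (X : Ω → (Fin p → ℝ)) (hX : Measurable X)
    (hX2 : ∀ i, MemLp (fun ω => X ω i) 2 μ)
    (hmean : ∀ i, ∫ ω, X ω i ∂μ = 0)
    (Z : Ω → ℝ) (hZ : Z = fun ω => ∑ i, β i * X ω i)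
    (Sig : Matrix (Fin p) (Fin p) ℝ)
    (hSig : ∀ i j, Sig i j = ∫ ω, X ω i * X ω j ∂μ)
    (hSigInv : IsUnit Sig.det)
    (hquad : 0 < β ⬝ᵥ Sig.mulVec β)
    (hLCM : ∀ i, μ[fun ω => X ω i | MeasurableSpace.comap Z inferInstance]
        =ᵐ[μ] fun ω => (Sig.mulVec β i) * (β ⬝ᵥ Sig.mulVec β)⁻¹ * Z ω)
    (S : Ω → ℝ) (hS : Integrable S μ) (hS2 : MemLp S 2 μ)
    (hcond : ∃ g : ℝ → ℝ, Measurable g ∧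
        μ[S | MeasurableSpace.comap X inferInstance] =ᵐ[μ] fun ω => g (Z ω))
    (cov : Fin p → ℝ)
    (hcov : ∀ i, cov i = (∫ ω, X ω i * S ω ∂μ) - (∫ ω, X ω i ∂μ) * (∫ ω, S ω ∂μ))
    (covZS : ℝ)
    (hcovZS : covZS = (∫ ω, Z ω * S ω ∂μ) - (∫ ω, Z ω ∂μ) * (∫ ω, S ω ∂μ)) :
    cov = ((β ⬝ᵥ Sig.mulVec β)⁻¹ * covZS) • Sig.mulVec β ∧
      ∃ c : ℝ, Sig⁻¹.mulVec cov = c • β := by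
  obtain ⟨g, hg, hgZ⟩ := hcond
  have hmX : MeasurableSpace.comap X inferInstance ≤ mΩ := hX.comap_le
  have hZmeas : Measurable Z := by
    rw [hZ]
    exact Finset.measurable_sum _ fun i _ =>
      measurable_const.mul ((measurable_pi_apply i).comp hX)
  have hmZ : MeasurableSpace.comap Z inferInstance ≤ mΩ := hZmeas.comap_le
  have hX_mX : Measurable[MeasurableSpace.comap X inferInstance] X :=
    measurable_iff_comap_le.mpr le_rfl
  have hXi_mX : ∀ i, Measurable[MeasurableSpace.comap X inferInstance] (fun ω => X ω i) :=
    fun i => (measurable_pi_apply i).comp hX_mX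
  have hZ_mZ : Measurable[MeasurableSpace.comap Z inferInstance] Z :=
    measurable_iff_comap_le.mpr le_rfl
  have hZ_mX : Measurable[MeasurableSpace.comap X inferInstance] Z := by
    rw [hZ]
    exact Finset.measurable_sum _ fun i _ => measurable_const.mul (hXi_mX i)
  have hgZ_mZ : Measurable[MeasurableSpace.comap Z inferInstance] (fun ω => g (Z ω)) :=
    hg.comp hZ_mZ
  -- integrability
  have hXint : ∀ i, Integrable (fun ω => X ω i) μ := fun i => (hX2 i).integrable one_le_two
  have hXiS : ∀ i, Integrable (fun ω => X ω i * S ω) μ := by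
    intro i
    have := memLp_one_iff_integrable.mp
      (hS2.smul (φ := fun ω => X ω i) (r := 1) (hX2 i))
    exact this
  have hZ2 : MemLp Z 2 μ := by
    rw [hZ]
    exact memLp_finset_sum _ fun i _ => (hX2 i).const_mul (β i)
  have hZint : Integrable Z μ := hZ2.integrable one_le_two
  have hZS : Integrable (fun ω => Z ω * S ω) μ := by
    have := memLp_one_iff_integrable.mp
      (hS2.smul (φ := Z) (r := 1) hZ2)
    exact this
  -- pull-out over σ(X) and replacement of the conditional expectation by g ∘ Z
  have pull : ∀ f : Ω → ℝ, Measurable[MeasurableSpace.comap X inferInstance] f →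
      Integrable (fun ω => f ω * S ω) μ →
      μ[fun ω => f ω * S ω | MeasurableSpace.comap X inferInstance]
        =ᵐ[μ] fun ω => f ω * g (Z ω) := by
    intro f hf hfS
    have h2 := condExp_mul_of_stronglyMeasurable_left (μ := μ)
      (m := MeasurableSpace.comap X inferInstance) hf.stronglyMeasurable hfS hS
    refine h2.trans ?_
    filter_upwards [hgZ] with ω hω
    simp only [Pi.mul_apply]
    rw [hω]
  have key : ∀ f : Ω → ℝ, Measurable[MeasurableSpace.comap X inferInstance] f →
      Integrable (fun ω => f ω * S ω) μ →
      ∫ ω, f ω * S ω ∂μ = ∫ ω, f ω * g (Z ω) ∂μ := by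
    intro f hf hfS
    rw [← integral_condExp hmX (f := fun ω => f ω * S ω)]
    exact integral_congr_ae (pull f hf hfS)
  have hfgZ : ∀ f : Ω → ℝ, Measurable[MeasurableSpace.comap X inferInstance] f →
      Integrable (fun ω => f ω * S ω) μ →
      Integrable (fun ω => f ω * g (Z ω)) μ := by
    intro f hf hfS
    exact (integrable_condExp (m := MeasurableSpace.comap X inferInstance)).congr
      (pull f hf hfS)
  -- ∫ Z = 0
  have hZmean : ∫ ω, Z ω ∂μ = 0 := by
    rw [hZ, integral_finset_sum _ (fun i _ => (hXint i).const_mul (β i))]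
    simp [integral_const_mul, hmean]
  -- covZS = ∫ g(Z) ⬝ Z
  have hcovZS' : covZS = ∫ ω, g (Z ω) * Z ω ∂μ := by
    rw [hcovZS, hZmean, zero_mul, sub_zero, key Z hZ_mX hZS]
    exact integral_congr_ae (Filter.Eventually.of_forall fun ω => mul_comm _ _)
  -- cov i = c_i * covZS
  have hcovi : ∀ i, cov i = Sig.mulVec β i * (β ⬝ᵥ Sig.mulVec β)⁻¹ * covZS := by
    intro i
    have h0 : cov i = ∫ ω, X ω i * S ω ∂μ := by rw [hcov, hmean, zero_mul, sub_zero]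
    rw [h0, key _ (hXi_mX i) (hXiS i)]
    have hInt : Integrable (fun ω => g (Z ω) * X ω i) μ :=
      (hfgZ _ (hXi_mX i) (hXiS i)).congr
        (Filter.Eventually.of_forall fun ω => mul_comm _ _)
    have e1 : ∫ ω, X ω i * g (Z ω) ∂μ = ∫ ω, g (Z ω) * X ω i ∂μ :=
      integral_congr_ae (Filter.Eventually.of_forall fun ω => mul_comm _ _)
    have e2 : ∫ ω, g (Z ω) * X ω i ∂μ
        = ∫ ω, (μ[fun ω => g (Z ω) * X ω i | MeasurableSpace.comap Z inferInstance]) ω ∂μ :=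
      (integral_condExp hmZ).symm
    have e3 : μ[fun ω => g (Z ω) * X ω i | MeasurableSpace.comap Z inferInstance]
        =ᵐ[μ] fun ω => g (Z ω)
          * (μ[fun ω => X ω i | MeasurableSpace.comap Z inferInstance]) ω := by
      have := condExp_mul_of_stronglyMeasurable_left (μ := μ)
        (m := MeasurableSpace.comap Z inferInstance) hgZ_mZ.stronglyMeasurable hInt (hXint i)
      exact this
    have e4 : (fun ω => g (Z ω)
          * (μ[fun ω => X ω i | MeasurableSpace.comap Z inferInstance]) ω)
        =ᵐ[μ] fun ω => g (Z ω) * (Sig.mulVec β i * (β ⬝ᵥ Sig.mulVec β)⁻¹ * Z ω) := by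
      filter_upwards [hLCM i] with ω hω
      rw [hω]
    rw [e1, e2, integral_congr_ae (e3.trans e4), hcovZS']
    have hre : (fun ω => g (Z ω) * (Sig.mulVec β i * (β ⬝ᵥ Sig.mulVec β)⁻¹ * Z ω))
        = fun ω => (Sig.mulVec β i * (β ⬝ᵥ Sig.mulVec β)⁻¹) * (g (Z ω) * Z ω) := by
      funext ω; ring
    rw [hre, integral_const_mul]
  have h1 : cov = ((β ⬝ᵥ Sig.mulVec β)⁻¹ * covZS) • Sig.mulVec β := by
    funext i
    rw [hcovi i]
    simp only [Pi.smul_apply, smul_eq_mul]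
    ring
  refine ⟨h1, ⟨(β ⬝ᵥ Sig.mulVec β)⁻¹ * covZS, ?_⟩⟩
  rw [h1, Matrix.mulVec_smul, Matrix.mulVec_mulVec, Matrix.nonsing_inv_mul _ hSigInv,
    Matrix.one_mulVec]
end

section
/- The first Wasserstein distance between two probability measures on ℝ with cumulative distribution functions F and G equals the L¹ distance of their quantile functions: W₁(μ,ν) = ∫₀¹ |F^{-1}(s) − G^{-1}(s)| ds. -/
open MeasureTheory

/-- The generalized inverse (quantile function) of a probability measure on `ℝ`. -/
noncomputable def quantileFn (μ : Measure ℝ) (s : ℝ) : ℝ :=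
  sInf {x : ℝ | s ≤ ProbabilityTheory.cdf μ x}

open Set Filter ProbabilityTheory
open scoped Topology

set_option linter.unusedSectionVars false


lemma ind_eq_indicator {x y : ℝ} (hxy : x ≤ y) :
    (fun t => |(if x ≤ t then (1:ℝ) else 0) - (if y ≤ t then 1 else 0)|)
      = (Ico x y).indicator (fun _ => (1:ℝ)) := by
  funext t
  by_cases h1 : x ≤ t <;> by_cases h2 : y ≤ t
  · simp [indicator, h1, h2, not_lt.mpr h2]
  · simp [indicator, h1, h2, lt_of_not_ge h2]
  · exact absurd (hxy.trans h2) h1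
  · simp [indicator, h1, h2]

lemma integrable_ind (x y : ℝ) :
    Integrable (fun t => |(if x ≤ t then (1:ℝ) else 0) - (if y ≤ t then 1 else 0)|) volume := by
  rcases le_total x y with h | h
  · rw [ind_eq_indicator h]
    exact (integrable_indicator_iff measurableSet_Ico).mpr
      ((integrableOn_const_iff (C := (1:ℝ))).mpr (Or.inr (by rw [Real.volume_Ico]; exact ENNReal.ofReal_lt_top)))
  · have : (fun t => |(if x ≤ t then (1:ℝ) else 0) - (if y ≤ t then 1 else 0)|)
        = (fun t => |(if y ≤ t then (1:ℝ) else 0) - (if x ≤ t then 1 else 0)|) := by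
      funext t; rw [abs_sub_comm]
    rw [this, ind_eq_indicator h]
    exact (integrable_indicator_iff measurableSet_Ico).mpr
      ((integrableOn_const_iff (C := (1:ℝ))).mpr (Or.inr (by rw [Real.volume_Ico]; exact ENNReal.ofReal_lt_top)))

lemma integral_ind_aux {x y : ℝ} (hxy : x ≤ y) :
    ∫ t, |(if x ≤ t then (1:ℝ) else 0) - (if y ≤ t then 1 else 0)| = y - x := by
  rw [ind_eq_indicator hxy]
  rw [integral_indicator measurableSet_Ico]
  simp [Real.volume_Ico, ENNReal.toReal_ofReal (sub_nonneg.mpr hxy), hxy]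

lemma integral_ind (x y : ℝ) :
    ∫ t, |(if x ≤ t then (1:ℝ) else 0) - (if y ≤ t then 1 else 0)| = |x - y| := by
  rcases le_total x y with h | h
  · rw [integral_ind_aux h, abs_sub_comm, abs_of_nonneg (sub_nonneg.mpr h)]
  · have : (fun t => |(if x ≤ t then (1:ℝ) else 0) - (if y ≤ t then 1 else 0)|)
        = (fun t => |(if y ≤ t then (1:ℝ) else 0) - (if x ≤ t then 1 else 0)|) := by
      funext t; rw [abs_sub_comm]
    rw [this, integral_ind_aux h, abs_of_nonneg (sub_nonneg.mpr h)]

lemma ind2_eq_indicator {a b : ℝ} (hba : b ≤ a) :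
    (fun s => |(if s ≤ a then (1:ℝ) else 0) - (if s ≤ b then 1 else 0)|)
      = (Ioc b a).indicator (fun _ => (1:ℝ)) := by
  funext s
  by_cases h1 : s ≤ a <;> by_cases h2 : s ≤ b
  · simp [indicator, h1, h2, not_lt.mpr h2]
  · simp [indicator, h1, h2, lt_of_not_ge h2]
  · exact absurd (h2.trans hba) h1
  · simp [indicator, h1, h2, fun h : b < s => (not_le.mp h1)]

lemma integral_ind2_aux {a b : ℝ} (hba : b ≤ a) (hb0 : 0 ≤ b) (ha1 : a ≤ 1) :
    ∫ s in Ioo (0:ℝ) 1, |(if s ≤ a then (1:ℝ) else 0) - (if s ≤ b then 1 else 0)| = a - b := by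
  rw [ind2_eq_indicator hba, integral_indicator measurableSet_Ioc]
  rw [Measure.restrict_restrict measurableSet_Ioc]
  have hvol : volume (Ioc b a ∩ Ioo 0 1) = ENNReal.ofReal (a - b) := by
    apply le_antisymm
    · calc volume (Ioc b a ∩ Ioo 0 1) ≤ volume (Ioc b a) := measure_mono inter_subset_left
        _ = ENNReal.ofReal (a - b) := Real.volume_Ioc
    · calc ENNReal.ofReal (a - b) = volume (Ioo b a) := Real.volume_Ioo.symm
        _ ≤ volume (Ioc b a ∩ Ioo 0 1) := by
            apply measure_mono
            intro s hs
            exact ⟨⟨hs.1, hs.2.le⟩, lt_of_le_of_lt hb0 hs.1, lt_of_lt_of_le hs.2 ha1⟩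
  simp [measureReal_def, hvol, ENNReal.toReal_ofReal (sub_nonneg.mpr hba)]

lemma integral_ind2 (a b : ℝ) (ha0 : 0 ≤ a) (ha1 : a ≤ 1) (hb0 : 0 ≤ b) (hb1 : b ≤ 1) :
    ∫ s in Ioo (0:ℝ) 1, |(if s ≤ a then (1:ℝ) else 0) - (if s ≤ b then 1 else 0)| = |a - b| := by
  rcases le_total b a with h | h
  · rw [integral_ind2_aux h hb0 ha1, abs_of_nonneg (sub_nonneg.mpr h)]
  · have : (fun s => |(if s ≤ a then (1:ℝ) else 0) - (if s ≤ b then 1 else 0)|)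
        = (fun s => |(if s ≤ b then (1:ℝ) else 0) - (if s ≤ a then 1 else 0)|) := by
      funext s; rw [abs_sub_comm]
    rw [this, integral_ind2_aux h ha0 hb1, abs_sub_comm, abs_of_nonneg (sub_nonneg.mpr h)]


variable (μ : Measure ℝ) [IsProbabilityMeasure μ]

lemma qset_nonempty {s : ℝ} (hs1 : s < 1) : {x : ℝ | s ≤ cdf μ x}.Nonempty := by
  have h := tendsto_cdf_atTop μ
  have : ∀ᶠ x in atTop, s ≤ cdf μ x := h.eventually_const_le hs1
  exact this.exists

lemma qset_bddBelow {s : ℝ} (hs0 : 0 < s) : BddBelow {x : ℝ | s ≤ cdf μ x} := by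
  have h := tendsto_cdf_atBot μ
  have : ∀ᶠ x in atBot, cdf μ x < s := h.eventually_lt_const hs0
  obtain ⟨x, hx⟩ := this.exists
  refine ⟨x, fun y hy => ?_⟩
  by_contra hlt
  push_neg at hlt
  exact absurd (le_trans hy (monotone_cdf μ hlt.le)) (not_le.mpr hx)

lemma cdf_quantile_ge {s : ℝ} (hs0 : 0 < s) (hs1 : s < 1) : s ≤ cdf μ (quantileFn μ s) := by
  have hne := qset_nonempty μ hs1
  have hbd := qset_bddBelow μ hs0
  set a := quantileFn μ s with ha
  have h1 : ∀ x, a < x → s ≤ cdf μ x := by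
    intro x hx
    obtain ⟨y, hy, hyx⟩ := (csInf_lt_iff hbd hne).mp hx
    exact le_trans hy (monotone_cdf μ hyx.le)
  have h2 : Tendsto (cdf μ) (𝓝[>] a) (𝓝 (cdf μ a)) :=
    ((cdf μ).right_continuous a).tendsto.mono_left (nhdsWithin_mono _ Ioi_subset_Ici_self)
  exact ge_of_tendsto h2 (eventually_nhdsWithin_of_forall fun x hx => h1 x hx)

lemma quantile_le_iff {s : ℝ} (hs0 : 0 < s) (hs1 : s < 1) (t : ℝ) :
    quantileFn μ s ≤ t ↔ s ≤ cdf μ t := by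
  constructor
  · intro h
    exact le_trans (cdf_quantile_ge μ hs0 hs1) (monotone_cdf μ h)
  · intro h
    exact csInf_le (qset_bddBelow μ hs0) h

lemma monotoneOn_quantile : MonotoneOn (quantileFn μ) (Ioo 0 1) := by
  intro s hs t ht hst
  exact le_csInf (qset_nonempty μ ht.2) fun x hx =>
    csInf_le (qset_bddBelow μ hs.1) (le_trans hst hx)

instance : IsProbabilityMeasure (volume.restrict (Ioo (0:ℝ) 1)) :=
  ⟨by simp [Real.volume_Ioo]⟩

lemma aemeasurable_quantile : AEMeasurable (quantileFn μ) (volume.restrict (Ioo (0:ℝ) 1)) :=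
  aemeasurable_restrict_of_monotoneOn measurableSet_Ioo (monotoneOn_quantile μ)

lemma map_quantile : (volume.restrict (Ioo (0:ℝ) 1)).map (quantileFn μ) = μ := by
  have hq := aemeasurable_quantile μ
  haveI : IsProbabilityMeasure ((volume.restrict (Ioo (0:ℝ) 1)).map (quantileFn μ)) :=
    Measure.isProbabilityMeasure_map hq
  refine Measure.ext_of_Iic _ _ (fun t => ?_)
  rw [Measure.map_apply_of_aemeasurable hq measurableSet_Iic, ← ofReal_cdf μ t,
    Measure.restrict_apply' measurableSet_Ioo]
  have hset : quantileFn μ ⁻¹' Iic t ∩ Ioo 0 1 = Iic (cdf μ t) ∩ Ioo 0 1 := by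
    ext s
    simp only [mem_inter_iff, mem_preimage, mem_Iic, mem_Ioo, and_congr_left_iff]
    intro hs
    exact quantile_le_iff μ hs.1 hs.2 t
  rw [hset]
  rcases eq_or_lt_of_le (cdf_le_one μ t) with h1 | h1
  · have : Iic (cdf μ t) ∩ Ioo 0 1 = Ioo (0:ℝ) 1 := by
      rw [inter_eq_right]
      intro s hs; exact le_of_lt (h1 ▸ hs.2)
    rw [this, Real.volume_Ioo, h1]; norm_num
  · have : Iic (cdf μ t) ∩ Ioo 0 1 = Ioc (0:ℝ) (cdf μ t) := by
      ext s
      simp only [mem_inter_iff, mem_Iic, mem_Ioo, mem_Ioc]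
      constructor
      · rintro ⟨h, h0, _⟩; exact ⟨h0, h⟩
      · rintro ⟨h0, h⟩; exact ⟨h, h0, lt_of_le_of_lt h h1⟩
    rw [this, Real.volume_Ioc, sub_zero]

lemma integrable_quantile (hμ : Integrable (fun x => |x|) μ) :
    Integrable (quantileFn μ) (volume.restrict (Ioo (0:ℝ) 1)) := by
  have hq := aemeasurable_quantile μ
  have h1 : Integrable (fun x => |x|) ((volume.restrict (Ioo (0:ℝ) 1)).map (quantileFn μ)) := by
    rw [map_quantile μ]; exact hμ
  have h2 := (integrable_map_measure h1.aestronglyMeasurable hq).mp h1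
  have h3 : Integrable (fun s => ‖quantileFn μ s‖) (volume.restrict (Ioo (0:ℝ) 1)) := by
    simpa [Function.comp_def, Real.norm_eq_abs] using h2
  exact (integrable_norm_iff hq.aestronglyMeasurable).mp h3

variable (ν : Measure ℝ) [IsProbabilityMeasure ν]

/-- The two-variable indicator difference, expressed via cdfs. -/
noncomputable def f2 (μ ν : Measure ℝ) (s t : ℝ) : ℝ :=
  |(if s ≤ cdf μ t then (1:ℝ) else 0) - (if s ≤ cdf ν t then 1 else 0)|

lemma measurable_uncurry_f2 : Measurable (Function.uncurry (f2 μ ν)) := by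
  apply Measurable.abs
  apply Measurable.sub
  · exact Measurable.ite
      (measurableSet_le measurable_fst ((monotone_cdf μ).measurable.comp measurable_snd))
      measurable_const measurable_const
  · exact Measurable.ite
      (measurableSet_le measurable_fst ((monotone_cdf ν).measurable.comp measurable_snd))
      measurable_const measurable_const

lemma f2_eq_of_mem {s : ℝ} (hs : s ∈ Ioo (0:ℝ) 1) :
    f2 μ ν s = fun t =>
      |(if quantileFn μ s ≤ t then (1:ℝ) else 0) - (if quantileFn ν s ≤ t then 1 else 0)| := by
  funext t
  unfold f2
  rw [if_congr (quantile_le_iff μ hs.1 hs.2 t).symm rfl rfl,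
    if_congr (quantile_le_iff ν hs.1 hs.2 t).symm rfl rfl]

lemma integral_f2_of_mem {s : ℝ} (hs : s ∈ Ioo (0:ℝ) 1) :
    ∫ t, f2 μ ν s t = |quantileFn μ s - quantileFn ν s| := by
  rw [f2_eq_of_mem μ ν hs]; exact integral_ind _ _

lemma integrable_f2_of_mem {s : ℝ} (hs : s ∈ Ioo (0:ℝ) 1) :
    Integrable (f2 μ ν s) volume := by
  rw [f2_eq_of_mem μ ν hs]; exact integrable_ind _ _

lemma integrable_uncurry_f2 (hμ : Integrable (fun x => |x|) μ)
    (hν : Integrable (fun x => |x|) ν) :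
    Integrable (Function.uncurry (f2 μ ν)) ((volume.restrict (Ioo (0:ℝ) 1)).prod volume) := by
  refine (integrable_prod_iff (measurable_uncurry_f2 μ ν).aestronglyMeasurable).mpr ⟨?_, ?_⟩
  · filter_upwards [ae_restrict_mem measurableSet_Ioo] with s hs
    exact integrable_f2_of_mem μ ν hs
  · apply Integrable.congr (((integrable_quantile μ hμ).sub (integrable_quantile ν hν)).abs)
    filter_upwards [ae_restrict_mem measurableSet_Ioo] with s hs
    rw [show (fun t => ‖Function.uncurry (f2 μ ν) (s, t)‖) = f2 μ ν s by
      funext t; simp [Real.norm_eq_abs, Function.uncurry, f2, abs_abs]]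
    exact (integral_f2_of_mem μ ν hs).symm

/-- Step 1: the quantile L¹ distance equals the L¹ distance of the cdfs. -/
lemma quantile_L1_eq_cdf_L1 (hμ : Integrable (fun x => |x|) μ)
    (hν : Integrable (fun x => |x|) ν) :
    ∫ s in Ioo (0:ℝ) 1, |quantileFn μ s - quantileFn ν s|
      = ∫ t, |cdf μ t - cdf ν t| := by
  have h1 : ∫ s in Ioo (0:ℝ) 1, |quantileFn μ s - quantileFn ν s|
      = ∫ s in Ioo (0:ℝ) 1, ∫ t, f2 μ ν s t := by
    refine integral_congr_ae ?_
    filter_upwards [ae_restrict_mem measurableSet_Ioo] with s hs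
    exact (integral_f2_of_mem μ ν hs).symm
  rw [h1, integral_integral_swap (integrable_uncurry_f2 μ ν hμ hν)]
  congr 1
  funext t
  exact integral_ind2 _ _ (cdf_nonneg μ t) (cdf_le_one μ t) (cdf_nonneg ν t) (cdf_le_one ν t)

/-- The two-variable indicator difference on a coupling. -/
noncomputable def g2 (p : ℝ × ℝ) (t : ℝ) : ℝ :=
  |(if p.1 ≤ t then (1:ℝ) else 0) - (if p.2 ≤ t then 1 else 0)|

lemma measurable_uncurry_g2 : Measurable (Function.uncurry g2) := by
  apply Measurable.abs
  apply Measurable.sub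
  · exact Measurable.ite (measurableSet_le (measurable_fst.comp measurable_fst) measurable_snd)
      measurable_const measurable_const
  · exact Measurable.ite (measurableSet_le (measurable_snd.comp measurable_fst) measurable_snd)
      measurable_const measurable_const

lemma integrable_abs_fst_sub_snd (π : Measure (ℝ × ℝ)) [IsProbabilityMeasure π]
    (h1 : π.map Prod.fst = μ) (h2 : π.map Prod.snd = ν)
    (hμ : Integrable (fun x => |x|) μ) (hν : Integrable (fun x => |x|) ν) :
    Integrable (fun p : ℝ × ℝ => |p.1 - p.2|) π := by
  have hμ' : Integrable (fun x => |x|) (π.map Prod.fst) := h1 ▸ hμ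
  have hν' : Integrable (fun x => |x|) (π.map Prod.snd) := h2 ▸ hν
  have hfst : Integrable (fun p : ℝ × ℝ => |p.1|) π :=
    (integrable_map_measure hμ'.aestronglyMeasurable measurable_fst.aemeasurable).mp hμ'
  have hsnd : Integrable (fun p : ℝ × ℝ => |p.2|) π :=
    (integrable_map_measure hν'.aestronglyMeasurable measurable_snd.aemeasurable).mp hν'
  refine (hfst.add hsnd).mono' ((measurable_fst.sub measurable_snd).abs.aestronglyMeasurable) ?_
  refine Eventually.of_forall fun p => ?_
  rw [Real.norm_eq_abs, abs_abs]
  exact (abs_sub p.1 p.2).trans le_rfl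

lemma integrable_uncurry_g2 (π : Measure (ℝ × ℝ)) [IsProbabilityMeasure π]
    (h1 : π.map Prod.fst = μ) (h2 : π.map Prod.snd = ν)
    (hμ : Integrable (fun x => |x|) μ) (hν : Integrable (fun x => |x|) ν) :
    Integrable (Function.uncurry g2) (π.prod volume) := by
  refine (integrable_prod_iff measurable_uncurry_g2.aestronglyMeasurable).mpr ⟨?_, ?_⟩
  · exact Eventually.of_forall fun p => integrable_ind p.1 p.2
  · apply Integrable.congr (integrable_abs_fst_sub_snd μ ν π h1 h2 hμ hν)
    refine Eventually.of_forall fun p => ?_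
    show |p.1 - p.2| = ∫ t, ‖Function.uncurry g2 (p, t)‖
    rw [show (fun t => ‖Function.uncurry g2 (p, t)‖) = g2 p by
      funext t; simp [Real.norm_eq_abs, Function.uncurry, g2, abs_abs]]
    exact (integral_ind p.1 p.2).symm

lemma integral_ind_fst (π : Measure (ℝ × ℝ)) [IsProbabilityMeasure π]
    (h1 : π.map Prod.fst = μ) (t : ℝ) :
    ∫ p : ℝ × ℝ, (if p.1 ≤ t then (1:ℝ) else 0) ∂π = cdf μ t := by
  have hset : MeasurableSet {p : ℝ × ℝ | p.1 ≤ t} :=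
    measurableSet_le measurable_fst measurable_const
  have : (fun p : ℝ × ℝ => if p.1 ≤ t then (1:ℝ) else 0)
      = {p : ℝ × ℝ | p.1 ≤ t}.indicator (fun _ => (1:ℝ)) := by
    funext p; by_cases h : p.1 ≤ t <;> simp [indicator, h]
  rw [this, integral_indicator_const (1:ℝ) hset, smul_eq_mul, mul_one]
  have : {p : ℝ × ℝ | p.1 ≤ t} = Prod.fst ⁻¹' Iic t := rfl
  rw [this, measureReal_def, ← Measure.map_apply measurable_fst measurableSet_Iic, h1, cdf_eq_real,
    measureReal_def]

lemma step2 (π : Measure (ℝ × ℝ)) [IsProbabilityMeasure π]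
    (h1 : π.map Prod.fst = μ) (h2 : π.map Prod.snd = ν)
    (hμ : Integrable (fun x => |x|) μ) (hν : Integrable (fun x => |x|) ν) :
    ∫ t, |cdf μ t - cdf ν t| ≤ ∫ p : ℝ × ℝ, |p.1 - p.2| ∂π := by
  have hg := integrable_uncurry_g2 μ ν π h1 h2 hμ hν
  have hval : ∫ p : ℝ × ℝ, |p.1 - p.2| ∂π = ∫ t, ∫ p : ℝ × ℝ, g2 p t ∂π := by
    rw [← integral_integral_swap hg]
    exact integral_congr_ae (Eventually.of_forall fun p => (integral_ind p.1 p.2).symm)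
  rw [hval]
  refine integral_mono_of_nonneg (Eventually.of_forall fun t => abs_nonneg _)
    hg.integral_prod_right (Eventually.of_forall fun t => ?_)
  -- |F t - G t| ≤ ∫ p, g2 p t ∂π
  have hind1 : Integrable (fun p : ℝ × ℝ => if p.1 ≤ t then (1:ℝ) else 0) π := by
    refine (integrable_const (1:ℝ)).mono' ?_ (Eventually.of_forall fun p => ?_)
    · exact (Measurable.ite (measurableSet_le measurable_fst measurable_const)
        measurable_const measurable_const).aestronglyMeasurable
    · by_cases h : p.1 ≤ t <;> simp [h]
  have hind2 : Integrable (fun p : ℝ × ℝ => if p.2 ≤ t then (1:ℝ) else 0) π := by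
    refine (integrable_const (1:ℝ)).mono' ?_ (Eventually.of_forall fun p => ?_)
    · exact (Measurable.ite (measurableSet_le measurable_snd measurable_const)
        measurable_const measurable_const).aestronglyMeasurable
    · by_cases h : p.2 ≤ t <;> simp [h]
  have hF : ∫ p : ℝ × ℝ, (if p.1 ≤ t then (1:ℝ) else 0) ∂π = cdf μ t :=
    integral_ind_fst μ π h1 t
  have hG : ∫ p : ℝ × ℝ, (if p.2 ≤ t then (1:ℝ) else 0) ∂π = cdf ν t := by
    have hset : MeasurableSet {p : ℝ × ℝ | p.2 ≤ t} :=
      measurableSet_le measurable_snd measurable_const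
    have heq : (fun p : ℝ × ℝ => if p.2 ≤ t then (1:ℝ) else 0)
        = {p : ℝ × ℝ | p.2 ≤ t}.indicator (fun _ => (1:ℝ)) := by
      funext p; by_cases h : p.2 ≤ t <;> simp [indicator, h]
    rw [heq, integral_indicator_const (1:ℝ) hset, smul_eq_mul, mul_one]
    have : {p : ℝ × ℝ | p.2 ≤ t} = Prod.snd ⁻¹' Iic t := rfl
    rw [this, measureReal_def, ← Measure.map_apply measurable_snd measurableSet_Iic, h2, cdf_eq_real,
      measureReal_def]
  have hdiff : cdf μ t - cdf ν t
      = ∫ p : ℝ × ℝ, ((if p.1 ≤ t then (1:ℝ) else 0) - (if p.2 ≤ t then 1 else 0)) ∂π := by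
    rw [integral_sub hind1 hind2, hF, hG]
  calc |cdf μ t - cdf ν t|
      = |∫ p : ℝ × ℝ, ((if p.1 ≤ t then (1:ℝ) else 0) - (if p.2 ≤ t then 1 else 0)) ∂π| := by
        rw [← hdiff]
    _ ≤ ∫ p : ℝ × ℝ, |(if p.1 ≤ t then (1:ℝ) else 0) - (if p.2 ≤ t then 1 else 0)| ∂π := by
        simpa [Real.norm_eq_abs] using
          norm_integral_le_integral_norm
            (fun p : ℝ × ℝ => (if p.1 ≤ t then (1:ℝ) else 0) - (if p.2 ≤ t then 1 else 0)) (μ := π)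
    _ = ∫ p : ℝ × ℝ, g2 p t ∂π := rfl

lemma comonotone_coupling :
    ∃ π : Measure (ℝ × ℝ), IsProbabilityMeasure π ∧
      π.map Prod.fst = μ ∧ π.map Prod.snd = ν ∧
      (∫ s in Ioo (0:ℝ) 1, |quantileFn μ s - quantileFn ν s|) = ∫ p : ℝ × ℝ, |p.1 - p.2| ∂π := by
  have hpair : AEMeasurable (fun s => (quantileFn μ s, quantileFn ν s))
      (volume.restrict (Ioo (0:ℝ) 1)) :=
    (aemeasurable_quantile μ).prodMk (aemeasurable_quantile ν)
  refine ⟨(volume.restrict (Ioo (0:ℝ) 1)).map (fun s => (quantileFn μ s, quantileFn ν s)),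
    Measure.isProbabilityMeasure_map hpair, ?_, ?_, ?_⟩
  · rw [AEMeasurable.map_map_of_aemeasurable measurable_fst.aemeasurable hpair]
    exact map_quantile μ
  · rw [AEMeasurable.map_map_of_aemeasurable measurable_snd.aemeasurable hpair]
    exact map_quantile ν
  · rw [integral_map (f := fun p : ℝ × ℝ => |p.1 - p.2|) hpair ((measurable_fst.sub measurable_snd).abs.aestronglyMeasurable)]

/-- The 1-Wasserstein distance between two probability measures on `ℝ` with finite first
moments, defined as the infimum of `E|X−Y|` over couplings, equals the `L¹` distance of
their quantile functions. -/
theorem wasserstein_one_eq_quantile_L1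
    (μ ν : Measure ℝ) [IsProbabilityMeasure μ] [IsProbabilityMeasure ν]
    (hμ : Integrable (fun x => |x|) μ) (hν : Integrable (fun x => |x|) ν) :
    sInf {c : ℝ | ∃ π : Measure (ℝ × ℝ), IsProbabilityMeasure π ∧
        π.map Prod.fst = μ ∧ π.map Prod.snd = ν ∧ c = ∫ p, |p.1 - p.2| ∂π}
      = ∫ s in Set.Ioo (0 : ℝ) 1, |quantileFn μ s - quantileFn ν s| := by
  obtain ⟨π₀, hπ₀, hfst₀, hsnd₀, hval₀⟩ := comonotone_coupling μ ν
  have hmem : (∫ s in Ioo (0:ℝ) 1, |quantileFn μ s - quantileFn ν s|)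
      ∈ {c : ℝ | ∃ π : Measure (ℝ × ℝ), IsProbabilityMeasure π ∧
        π.map Prod.fst = μ ∧ π.map Prod.snd = ν ∧ c = ∫ p, |p.1 - p.2| ∂π} :=
    ⟨π₀, hπ₀, hfst₀, hsnd₀, hval₀⟩
  apply le_antisymm
  · refine csInf_le ⟨0, ?_⟩ hmem
    rintro c ⟨π, hπ, -, -, rfl⟩
    exact integral_nonneg fun p => abs_nonneg _
  · refine le_csInf ⟨_, hmem⟩ ?_
    rintro c ⟨π, hπ, h1, h2, rfl⟩
    rw [quantile_L1_eq_cdf_L1 μ ν hμ hν]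
    exact step2 μ ν π h1 h2 hμ hν
end
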